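/- Let G = (V,E) be a graph and v ∈ V a vertex of degree at least 2. Then γ_sp(G) − 1 ≤ γ_sp(G/v) ≤ γ_sp(G) + ⌊deg(v)/2⌋ − 1. -/
import Mathlib


open SimpleGraph

/-- A super dominating set: a dominating set `S` such that every vertex `u ∉ S`
has a private "super" dominator `v ∈ S` with `N(v) ∩ (V \ S) = {u}`. -/
def IsSuperDominatingSet {V : Type*} (G : SimpleGraph V) (S : Finset V) : Prop :=
  (∀ u ∉ S, ∃ v ∈ S, G.Adj v u) ∧
  (∀ u ∉ S, ∃ v ∈ S, ∀ w, (G.Adj v w ∧ w ∉ S) ↔ w = u)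

/-- The super domination number: minimum size of a super dominating set. -/
noncomputable def superDominationNumber {V : Type*} (G : SimpleGraph V) : ℕ :=
  sInf {n | ∃ S : Finset V, IsSuperDominatingSet G S ∧ S.card = n}

/-- Edge contraction of the edge `uv`: `v` is deleted and `u` plays the role of the merged
vertex, adjacent to all former neighbours of `u` or `v`. -/
def contractEdge {V : Type*} (G : SimpleGraph V) (u v : V) : SimpleGraph {x : V // x ≠ v} :=
  SimpleGraph.fromRel (fun a b => G.Adj a.val b.val ∨ (a.val = u ∧ G.Adj v b.val))

/-- Vertex deletion. -/
def deleteVertex {V : Type*} (G : SimpleGraph V) (v : V) : SimpleGraph {x : V // x ≠ v} :=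
  G.induce {x : V | x ≠ v}

/-- Vertex contraction: delete `v` and make its open neighbourhood a clique. -/
def contractVertex {V : Type*} (G : SimpleGraph V) (v : V) : SimpleGraph {x : V // x ≠ v} :=
  SimpleGraph.fromRel (fun a b => G.Adj a.val b.val ∨ (G.Adj v a.val ∧ G.Adj v b.val))

open Finset in
private lemma sdn_exists {V : Type*} [Finite V] (G : SimpleGraph V) :
    ∃ S : Finset V, IsSuperDominatingSet G S ∧ S.card = superDominationNumber G := by
  have := Fintype.ofFinite V
  have h : superDominationNumber G ∈
      {n | ∃ S : Finset V, IsSuperDominatingSet G S ∧ S.card = n} := by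
    apply Nat.sInf_mem
    exact ⟨(Finset.univ : Finset V).card, Finset.univ,
      ⟨fun u hu => absurd (mem_univ u) hu, fun u hu => absurd (mem_univ u) hu⟩, rfl⟩
  obtain ⟨S, h1, h2⟩ := h
  exact ⟨S, h1, h2⟩

private lemma sdn_le {V : Type*} (G : SimpleGraph V) (S : Finset V)
    (h : IsSuperDominatingSet G S) : superDominationNumber G ≤ S.card :=
  Nat.sInf_le ⟨S, h, rfl⟩

private lemma cv_adj {V : Type*} (G : SimpleGraph V) (v : V) (a b : {x : V // x ≠ v}) :
    (contractVertex G v).Adj a b ↔ a ≠ b ∧ (G.Adj a.val b.val ∨ (G.Adj v a.val ∧ G.Adj v b.val)) := by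
  rw [contractVertex, SimpleGraph.fromRel_adj]
  constructor
  · rintro ⟨h1, h2 | h2⟩
    · exact ⟨h1, h2⟩
    · refine ⟨h1, ?_⟩
      rcases h2 with h2 | ⟨h2, h3⟩
      · exact Or.inl h2.symm
      · exact Or.inr ⟨h3, h2⟩
  · rintro ⟨h1, h2⟩; exact ⟨h1, Or.inl h2⟩

open Finset in
private lemma lower_bd {V : Type*} [Fintype V] (G : SimpleGraph V) (v : V) :
    superDominationNumber G ≤ superDominationNumber (contractVertex G v) + 1 := by
  classical
  obtain ⟨S', hS', hc⟩ := sdn_exists (contractVertex G v)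
  set S : Finset V := insert v (S'.image Subtype.val) with hSdef
  have hvS : v ∈ S := mem_insert_self _ _
  have hmemS : ∀ (a : {x : V // x ≠ v}), a ∈ S' → a.val ∈ S := by
    intro a ha
    exact mem_insert_of_mem (mem_image_of_mem _ ha)
  have hne : ∀ u : V, u ∉ S → u ≠ v := fun u hu h => hu (h ▸ hvS)
  have hnS' : ∀ (u : V) (h : u ≠ v), u ∉ S → (⟨u, h⟩ : {x : V // x ≠ v}) ∉ S' :=
    fun u h hu hmem => hu (hmemS _ hmem)
  have hSsd : IsSuperDominatingSet G S := by
    constructor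
    · intro u hu
      obtain ⟨w, hw, hadj⟩ := hS'.1 ⟨u, hne u hu⟩ (hnS' u (hne u hu) hu)
      rw [cv_adj] at hadj
      rcases hadj.2 with h | ⟨h1, h2⟩
      · exact ⟨w.val, hmemS w hw, h⟩
      · exact ⟨v, hvS, h2⟩
    · intro u hu
      have huv := hne u hu
      obtain ⟨w, hw, hpriv⟩ := hS'.2 ⟨u, huv⟩ (hnS' u huv hu)
      have hadju : (contractVertex G v).Adj w ⟨u, huv⟩ :=
        ((hpriv ⟨u, huv⟩).2 rfl).1
      rw [cv_adj] at hadju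
      by_cases hwa : G.Adj w.val u
      · refine ⟨w.val, hmemS w hw, fun x => ⟨?_, ?_⟩⟩
        · rintro ⟨hax, hxS⟩
          have hxv : x ≠ v := hne x hxS
          have hx' := hnS' x hxv hxS
          have hadj : (contractVertex G v).Adj w ⟨x, hxv⟩ := by
            rw [cv_adj]
            exact ⟨fun h => hx' (h ▸ hw), Or.inl hax⟩
          have := (hpriv ⟨x, hxv⟩).1 ⟨hadj, hx'⟩
          exact congrArg Subtype.val this
        · rintro rfl; exact ⟨hwa, hu⟩
      · rcases hadju.2 with h | ⟨hvw, hvu⟩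
        · exact absurd h hwa
        · refine ⟨v, hvS, fun x => ⟨?_, ?_⟩⟩
          · rintro ⟨hax, hxS⟩
            have hxv : x ≠ v := hne x hxS
            have hx' := hnS' x hxv hxS
            have hadj : (contractVertex G v).Adj w ⟨x, hxv⟩ := by
              rw [cv_adj]
              exact ⟨fun h => hx' (h ▸ hw), Or.inr ⟨hvw, hax⟩⟩
            have := (hpriv ⟨x, hxv⟩).1 ⟨hadj, hx'⟩
            exact congrArg Subtype.val this
          · rintro rfl; exact ⟨hvu, hu⟩
  have h1 : superDominationNumber G ≤ S.card := sdn_le G S hSsd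
  have h2 : S.card ≤ S'.card + 1 := by
    calc S.card ≤ (S'.image Subtype.val).card + 1 := card_insert_le _ _
    _ ≤ S'.card + 1 := by gcongr; exact card_image_le
  omega

open Finset in
private lemma upper_bd {V : Type*} [Fintype V] (G : SimpleGraph V) (v : V)
    (hv : 2 ≤ (G.neighborSet v).ncard) :
    superDominationNumber (contractVertex G v) ≤
      superDominationNumber G + (G.neighborSet v).ncard / 2 - 1 := by
  classical
  obtain ⟨D, hD, hcD⟩ := sdn_exists G
  have hdcard : (G.neighborSet v).ncard = (G.neighborFinset v).card := by
    rw [Set.ncard_eq_toFinset_card']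
    congr 1
  rw [hdcard] at hv ⊢
  set d := (G.neighborFinset v).card with hd
  by_cases hvD : v ∈ D
  · have hD1 : 1 ≤ D.card := card_pos.2 ⟨v, hvD⟩
    set T := G.neighborFinset v \ D with hT
    have hE : ∀ x : {y : V // y ≠ v}, x ∈ (D.erase v).subtype (fun y => y ≠ v) ↔ x.val ∈ D := by
      intro x; simp [Finset.mem_subtype, Finset.mem_erase, x.prop]
    have hEcard : ((D.erase v).subtype (fun y => y ≠ v)).card ≤ D.card - 1 := by
      calc ((D.erase v).subtype (fun y => y ≠ v)).card
          = ((D.erase v).filter (fun y => y ≠ v)).card := Finset.card_subtype _ _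
        _ ≤ (D.erase v).card := card_filter_le _ _
        _ = D.card - 1 := card_erase_of_mem hvD
    by_cases hts : T.card ≤ d / 2
    · -- D' = (D \ {v}) ∪ T
      set D' := (D.erase v).subtype (fun y => y ≠ v) ∪ T.subtype (fun y => y ≠ v) with hD'
      have hmemD' : ∀ x : {y : V // y ≠ v}, x ∈ D' ↔ (x.val ∈ D ∨ x.val ∈ T) := by
        intro x
        simp only [hD', Finset.mem_union, Finset.mem_subtype, hE]
      have key : ∀ u ∉ D', ∃ w ∈ D',
          ∀ x, ((contractVertex G v).Adj w x ∧ x ∉ D') ↔ x = u := by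
        intro u hu
        have huD : u.val ∉ D := fun h => hu ((hmemD' u).2 (Or.inl h))
        have huNv : u.val ∉ G.neighborFinset v := by
          intro h
          exact hu ((hmemD' u).2 (Or.inr (mem_sdiff.2 ⟨h, huD⟩)))
        obtain ⟨w, hwD, hpriv⟩ := hD.2 u.val huD
        have hadjwu : G.Adj w u.val := ((hpriv u.val).2 rfl).1
        have hwv : w ≠ v := by
          rintro rfl
          exact huNv (mem_neighborFinset .. |>.2 hadjwu)
        refine ⟨⟨w, hwv⟩, (hmemD' _).2 (Or.inl hwD), fun x => ⟨?_, ?_⟩⟩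
        · rintro ⟨hax, hxD'⟩
          rw [cv_adj] at hax
          rcases hax.2 with h | ⟨h1, h2⟩
          · have hxD : x.val ∉ D := fun h' => hxD' ((hmemD' x).2 (Or.inl h'))
            exact Subtype.ext ((hpriv x.val).1 ⟨h, hxD⟩)
          · exfalso
            apply hxD'
            rw [hmemD']
            by_cases hxD : x.val ∈ D
            · exact Or.inl hxD
            · exact Or.inr (mem_sdiff.2 ⟨(mem_neighborFinset ..).2 h2, hxD⟩)
        · rintro rfl
          refine ⟨?_, hu⟩
          rw [cv_adj]
          exact ⟨fun h => huD (by rw [← h]; exact hwD), Or.inl hadjwu⟩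
      have hsd : IsSuperDominatingSet (contractVertex G v) D' :=
        ⟨fun u hu => (key u hu).imp (fun w ⟨h1, h2⟩ => ⟨h1, ((h2 u).2 rfl).1⟩),
         key⟩
      have hle := sdn_le _ _ hsd
      have hcard : D'.card ≤ (D.card - 1) + T.card := by
        calc D'.card ≤ ((D.erase v).subtype (fun y => y ≠ v)).card
            + (T.subtype (fun y => y ≠ v)).card := card_union_le _ _
          _ ≤ (D.card - 1) + T.card := by
            gcongr
            calc (T.subtype (fun y => y ≠ v)).card
                = (T.filter (fun y => y ≠ v)).card := Finset.card_subtype _ _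
              _ ≤ T.card := card_filter_le _ _
      omega
    · -- t > d/2 : D' = (D \ {v}) ∪ Q
      set W := (G.neighborFinset v ∩ D).filter (fun w => (G.neighborFinset w \ D).card = 1)
        with hW
      set Q := W.biUnion (fun w => G.neighborFinset w \ D) with hQ
      have hQnotD : ∀ u ∈ Q, u ∉ D := by
        intro u hu
        obtain ⟨w, _, hw⟩ := mem_biUnion.1 hu
        exact (mem_sdiff.1 hw).2
      have hQclos : ∀ (u w : V), G.Adj v w → w ∈ D →
          (∀ x, (G.Adj w x ∧ x ∉ D) ↔ x = u) → u ∈ Q := by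
        intro u w hvw hwD hpriv
        have hset : G.neighborFinset w \ D = {u} := by
          ext x
          simp only [mem_sdiff, mem_neighborFinset, mem_singleton]
          exact hpriv x
        have hwW : w ∈ W := by
          rw [hW, mem_filter, mem_inter]
          exact ⟨⟨(mem_neighborFinset ..).2 hvw, hwD⟩, by rw [hset]; simp⟩
        exact mem_biUnion.2 ⟨w, hwW, by rw [hset]; exact mem_singleton_self u⟩
      have hQcard : Q.card ≤ d - T.card := by
        have h1 : Q.card ≤ W.card * 1 := by
          apply Finset.card_biUnion_le_card_mul
          intro w hw
          exact le_of_eq (mem_filter.1 hw).2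
        have h2 : W.card ≤ (G.neighborFinset v ∩ D).card := card_filter_le _ _
        have h3 : (G.neighborFinset v ∩ D).card + T.card = d :=
          Finset.card_inter_add_card_sdiff _ _
        omega
      have ht2 : 2 ≤ T.card := by
        have : 1 ≤ d / 2 := by omega
        omega
      set D' := (D.erase v).subtype (fun y => y ≠ v) ∪ Q.subtype (fun y => y ≠ v) with hD'
      have hmemD' : ∀ x : {y : V // y ≠ v}, x ∈ D' ↔ (x.val ∈ D ∨ x.val ∈ Q) := by
        intro x
        simp only [hD', Finset.mem_union, Finset.mem_subtype, hE]
      have key : ∀ u ∉ D', ∃ w ∈ D',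
          ∀ x, ((contractVertex G v).Adj w x ∧ x ∉ D') ↔ x = u := by
        intro u hu
        have huD : u.val ∉ D := fun h => hu ((hmemD' u).2 (Or.inl h))
        obtain ⟨w, hwD, hpriv⟩ := hD.2 u.val huD
        have hadjwu : G.Adj w u.val := ((hpriv u.val).2 rfl).1
        have hwv : w ≠ v := by
          rintro rfl
          -- then T ⊆ {u.val}, contradicting 2 ≤ T.card
          have hsub : T ⊆ {u.val} := by
            intro x hx
            rw [mem_sdiff, mem_neighborFinset] at hx
            exact mem_singleton.2 ((hpriv x).1 hx)
          have := card_le_card hsub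
          simp at this
          omega
        have hwNv : ¬ G.Adj v w := by
          intro h
          exact hu ((hmemD' u).2 (Or.inr (hQclos u.val w h hwD hpriv)))
        refine ⟨⟨w, hwv⟩, (hmemD' _).2 (Or.inl hwD), fun x => ⟨?_, ?_⟩⟩
        · rintro ⟨hax, hxD'⟩
          rw [cv_adj] at hax
          rcases hax.2 with h | ⟨h1, h2⟩
          · have hxD : x.val ∉ D := fun h' => hxD' ((hmemD' x).2 (Or.inl h'))
            exact Subtype.ext ((hpriv x.val).1 ⟨h, hxD⟩)
          · exact absurd h1 hwNv
        · rintro rfl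
          refine ⟨?_, hu⟩
          rw [cv_adj]
          exact ⟨fun h => huD (by rw [← h]; exact hwD), Or.inl hadjwu⟩
      have hsd : IsSuperDominatingSet (contractVertex G v) D' :=
        ⟨fun u hu => (key u hu).imp (fun w ⟨h1, h2⟩ => ⟨h1, ((h2 u).2 rfl).1⟩),
         key⟩
      have hle := sdn_le _ _ hsd
      have hcard : D'.card ≤ (D.card - 1) + Q.card := by
        calc D'.card ≤ ((D.erase v).subtype (fun y => y ≠ v)).card
            + (Q.subtype (fun y => y ≠ v)).card := card_union_le _ _
          _ ≤ (D.card - 1) + Q.card := by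
            gcongr
            calc (Q.subtype (fun y => y ≠ v)).card
                = (Q.filter (fun y => y ≠ v)).card := Finset.card_subtype _ _
              _ ≤ Q.card := card_filter_le _ _
      omega
  · -- v ∉ D : D' = D
    set D' := D.subtype (fun y => y ≠ v) with hD'
    have hmemD' : ∀ x : {y : V // y ≠ v}, x ∈ D' ↔ x.val ∈ D := by
      intro x; simp [hD', Finset.mem_subtype]
    have key : ∀ u ∉ D', ∃ w ∈ D',
        ∀ x, ((contractVertex G v).Adj w x ∧ x ∉ D') ↔ x = u := by
      intro u hu
      have huD : u.val ∉ D := fun h => hu ((hmemD' u).2 h)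
      obtain ⟨w, hwD, hpriv⟩ := hD.2 u.val huD
      have hadjwu : G.Adj w u.val := ((hpriv u.val).2 rfl).1
      have hwv : w ≠ v := fun h => hvD (h ▸ hwD)
      have hwNv : ¬ G.Adj v w := by
        intro h
        exact u.prop ((hpriv v).1 ⟨h.symm, hvD⟩).symm
      refine ⟨⟨w, hwv⟩, (hmemD' _).2 hwD, fun x => ⟨?_, ?_⟩⟩
      · rintro ⟨hax, hxD'⟩
        rw [cv_adj] at hax
        rcases hax.2 with h | ⟨h1, h2⟩
        · have hxD : x.val ∉ D := fun h' => hxD' ((hmemD' x).2 h')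
          exact Subtype.ext ((hpriv x.val).1 ⟨h, hxD⟩)
        · exact absurd h1 hwNv
      · rintro rfl
        refine ⟨?_, hu⟩
        rw [cv_adj]
        exact ⟨fun h => huD (by rw [← h]; exact hwD), Or.inl hadjwu⟩
    have hsd : IsSuperDominatingSet (contractVertex G v) D' :=
      ⟨fun u hu => (key u hu).imp (fun w ⟨h1, h2⟩ => ⟨h1, ((h2 u).2 rfl).1⟩),
       key⟩
    have hle := sdn_le _ _ hsd
    have hcard : D'.card ≤ D.card := by
      calc D'.card = (D.filter (fun y => y ≠ v)).card := Finset.card_subtype _ _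
        _ ≤ D.card := card_filter_le _ _
    omega

/-- If `v` has degree at least `2` in `G`, then
`γ_sp(G) - 1 ≤ γ_sp(G/v) ≤ γ_sp(G) + ⌊deg(v)/2⌋ - 1`. -/
theorem stmt17 {V : Type*} [Fintype V] (G : SimpleGraph V) (v : V)
    (hv : 2 ≤ (G.neighborSet v).ncard) :
    superDominationNumber G - 1 ≤ superDominationNumber (contractVertex G v) ∧
    superDominationNumber (contractVertex G v) ≤
      superDominationNumber G + (G.neighborSet v).ncard / 2 - 1 := by
  refine ⟨?_, upper_bd G v hv⟩
  have := lower_bd G v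
  omega
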